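/- arXiv:2305.03903 — 4 statements merged into one kernel-verified Lean document; each statement's English description precedes it below -/
import Mathlib

section
/- If a multiset of real-valued observations contains at least f+1 honest values and at most f Byzantine values, then the median of the multiset lies between the minimum honest value and the maximum honest value (inclusive). -/
/-- Median of a multiset of reals: the element at (1-indexed) position ⌈n/2⌉
of the sorted list, i.e. 0-indexed position (n-1)/2. -/
noncomputable def msMedian (s : Multiset ℝ) : ℝ :=
  (s.sort (· ≤ ·))[(Multiset.card s - 1) / 2]!

/-- If a multiset of observations contains at least f+1 honest values
and at most f Byzantine values, its median lies between the minimum and maximum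
honest values. -/
theorem median_between_honest (f : ℕ) (H B : Multiset ℝ)
    (hH : f + 1 ≤ Multiset.card H) (hB : Multiset.card B ≤ f) :
    (∃ a ∈ H, a ≤ msMedian (H + B)) ∧ (∃ b ∈ H, msMedian (H + B) ≤ b) := by
  classical
  set L := (H + B).sort (· ≤ ·) with hLdef
  have hsort : L.Pairwise (· ≤ ·) := Multiset.pairwise_sort _ _
  have hperm : (L : Multiset ℝ) = H + B := Multiset.sort_eq _ _
  set cH := Multiset.card H with hcH
  set cB := Multiset.card B with hcB
  have hlen : L.length = cH + cB := by
    rw [← Multiset.coe_card, hperm, Multiset.card_add]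
  set n := cH + cB with hn
  set k := (n - 1) / 2 with hk
  have hkn : k < L.length := by rw [hlen]; omega
  have hmed : msMedian (H + B) = L[k] := by
    show ((H + B).sort (· ≤ ·))[(Multiset.card (H + B) - 1) / 2]! = L[k]
    have : (Multiset.card (H + B) - 1) / 2 = k := by
      rw [Multiset.card_add]
    rw [this]
    exact getElem!_pos L k hkn
  have countH : ∀ x : ℝ, x ∉ H → Multiset.count x (H + B) = Multiset.count x B := by
    intro x hx
    rw [Multiset.count_add, Multiset.count_eq_zero.mpr hx, Nat.zero_add]
  constructor
  · by_contra hcon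
    push_neg at hcon
    rw [hmed] at hcon
    -- take (k+1) L consists of elements ≤ L[k], so none in H
    have hsub : (↑(L.take (k + 1)) : Multiset ℝ) ≤ B := by
      rw [Multiset.le_iff_count]
      intro x
      by_cases hx : x ∈ L.take (k + 1)
      · obtain ⟨i, hi, hxi⟩ := List.getElem_of_mem hx
        have hil : i < L.length := lt_of_lt_of_le hi (by simp [List.length_take])
        have hik : i ≤ k := by
          have := hi
          simp only [List.length_take] at this
          omega
        have hle : x ≤ L[k] := by
          rw [← hxi, List.getElem_take]
          exact hsort.rel_get_of_le (a := ⟨i, hil⟩) (b := ⟨k, hkn⟩) hik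
        have hxH : x ∉ H := fun hmem => absurd hle (not_le.mpr (hcon x hmem))
        calc Multiset.count x ↑(L.take (k + 1)) = (L.take (k + 1)).count x :=
              Multiset.coe_count x _
          _ ≤ L.count x := (List.take_sublist _ _).count_le x
          _ = Multiset.count x ↑L := (Multiset.coe_count x _).symm
          _ = Multiset.count x (H + B) := by rw [hperm]
          _ = Multiset.count x B := countH x hxH
      · rw [Multiset.count_eq_zero.mpr (by simpa using hx)]
        exact Nat.zero_le _
    have hcard := Multiset.card_le_card hsub
    rw [Multiset.coe_card, List.length_take] at hcard
    rw [hlen] at hcard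
    omega
  · by_contra hcon
    push_neg at hcon
    rw [hmed] at hcon
    have hsub : (↑(L.drop k) : Multiset ℝ) ≤ B := by
      rw [Multiset.le_iff_count]
      intro x
      by_cases hx : x ∈ L.drop k
      · obtain ⟨i, hi, hxi⟩ := List.getElem_of_mem hx
        have hil : k + i < L.length := by
          simp only [List.length_drop] at hi; omega
        have hge : L[k] ≤ x := by
          rw [← hxi, List.getElem_drop]
          exact hsort.rel_get_of_le (a := ⟨k, hkn⟩) (b := ⟨k + i, hil⟩) (Nat.le_add_right _ _)
        have hxH : x ∉ H := fun hmem => absurd hge (not_le.mpr (hcon x hmem))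
        calc Multiset.count x ↑(L.drop k) = (L.drop k).count x :=
              Multiset.coe_count x _
          _ ≤ L.count x := (List.drop_sublist _ _).count_le x
          _ = Multiset.count x ↑L := (Multiset.coe_count x _).symm
          _ = Multiset.count x (H + B) := by rw [hperm]
          _ = Multiset.count x B := countH x hxH
      · rw [Multiset.count_eq_zero.mpr (by simpa using hx)]
        exact Nat.zero_le _
    have hcard := Multiset.card_le_card hsub
    rw [Multiset.coe_card, List.length_drop] at hcard
    rw [hlen] at hcard
    omega
end

section
/- Among n = 3f+1 observations of which at most f are Byzantine and honest observations lie in [Hmin, Hmax], the median of any sub-multiset of 2f+1 of these observations lies in [Hmin, Hmax]. -/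
/-- Median of a multiset of odd size 2f+1: its (f+1)-st smallest element. -/
noncomputable def oddMedian (f : ℕ) (s : Multiset ℝ) : ℝ :=
  (s.sort (· ≤ ·))[f]!

/-!
Within any `2f+1` of the observations at most `f` are Byzantine, so more than half of them are
honest. Every honest value is at least `Hmin`, so more than half of the chosen values are
`≥ Hmin`, which forces the median to be `≥ Hmin`; symmetrically it is `≤ Hmax`.
-/

section SortedList

variable {α : Type*} [LinearOrder α]

theorem List.Pairwise.getElem_le_of_lt_countP {l : List α} (hl : l.Pairwise (· ≤ ·)) {k : ℕ}
    (hk : k < l.length) {c : α} (h : k < l.countP (· ≤ c)) : l[k] ≤ c := by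
  by_contra! hlt
  have hdrop : (l.drop k).countP (· ≤ c) = 0 := by
    have hsorted := hl.drop (i := k)
    rw [List.drop_eq_getElem_cons hk, List.pairwise_cons] at hsorted
    rw [List.countP_eq_zero, List.drop_eq_getElem_cons hk]
    rintro x (_ | ⟨_, hx⟩)
    · simpa using hlt
    · simpa using hlt.trans_le (hsorted.1 x hx)
  have : l.countP (· ≤ c) ≤ k := calc
    l.countP (· ≤ c) = (l.take k).countP (· ≤ c) + (l.drop k).countP (· ≤ c) := by
      rw [← List.countP_append, List.take_append_drop]
    _ ≤ k := by
      rw [hdrop, add_zero]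
      exact List.countP_le_length.trans (List.length_take_le k l)
  omega

theorem List.Pairwise.le_getElem_of_length_le_add_countP {l : List α} (hl : l.Pairwise (· ≤ ·))
    {k : ℕ} (hk : k < l.length) {c : α} (h : l.length ≤ k + l.countP (c ≤ ·)) : c ≤ l[k] := by
  -- the reversed list, read in `αᵒᵈ`, is again sorted and has `l[k]` at position `length - 1 - k`
  have hl' : (l.reverse.map OrderDual.toDual).Pairwise (· ≤ ·) := by
    rw [List.pairwise_map, List.pairwise_reverse]
    exact hl
  have hk' : l.length - 1 - k < (l.reverse.map OrderDual.toDual).length := by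
    rw [List.length_map, List.length_reverse]
    omega
  have hcount :
      l.length - 1 - k < (l.reverse.map OrderDual.toDual).countP (· ≤ OrderDual.toDual c) := by
    rw [List.countP_map, List.countP_reverse]
    simp only [Function.comp_def, OrderDual.toDual_le_toDual]
    omega
  simpa [List.getElem_reverse, show l.length - 1 - (l.length - 1 - k) = k by omega] using
    hl'.getElem_le_of_lt_countP hk' hcount

end SortedList

theorem Multiset.card_le_countP_add_card {α : Type*} {p : α → Prop} [DecidablePred p]
    {S H B : Multiset α} (hS : S ≤ H + B) (hH : ∀ x ∈ H, p x) :
    Multiset.card S ≤ S.countP p + Multiset.card B := by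
  have hnot : S.countP (¬p ·) ≤ Multiset.card B := calc
    S.countP (¬p ·) ≤ (H + B).countP (¬p ·) := Multiset.countP_le_of_le _ hS
    _ = B.countP (¬p ·) := by
      rw [Multiset.countP_add, Multiset.countP_eq_zero.mpr fun x hx => not_not.mpr (hH x hx),
        zero_add]
    _ ≤ Multiset.card B := Multiset.countP_le_card _ _
  rw [Multiset.card_eq_countP_add_countP p S]
  omega

theorem Multiset.countP_sort {α : Type*} [LinearOrder α] (s : Multiset α) (p : α → Prop)
    [DecidablePred p] : (s.sort (· ≤ ·)).countP (p ·) = s.countP p := by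
  conv_rhs => rw [← Multiset.sort_eq s (· ≤ ·)]
  rw [Multiset.coe_countP]

section OddMedian

variable {f : ℕ} {s : Multiset ℝ}

theorem oddMedian_eq_getElem_sort (hf : f < Multiset.card s) :
    oddMedian f s = (s.sort (· ≤ ·))[f]'(by rwa [Multiset.length_sort]) :=
  getElem!_pos _ _ _

theorem oddMedian_le (hs : Multiset.card s = 2 * f + 1) {c : ℝ} (h : f < s.countP (· ≤ c)) :
    oddMedian f s ≤ c := by
  rw [oddMedian_eq_getElem_sort (by omega)]
  exact (Multiset.pairwise_sort s _).getElem_le_of_lt_countP _ (by rwa [Multiset.countP_sort])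

theorem le_oddMedian (hs : Multiset.card s = 2 * f + 1) {c : ℝ} (h : f < s.countP (c ≤ ·)) :
    c ≤ oddMedian f s := by
  rw [oddMedian_eq_getElem_sort (by omega)]
  refine (Multiset.pairwise_sort s _).le_getElem_of_length_le_add_countP _ ?_
  rw [Multiset.countP_sort s (c ≤ ·), Multiset.length_sort]
  omega

end OddMedian

theorem median_of_submultiset_bounds_general (f : ℕ) (Hmin Hmax : ℝ)
    (H B T : Multiset ℝ)
    (hB : Multiset.card B ≤ f)
    (hHbound : ∀ x ∈ H, Hmin ≤ x ∧ x ≤ Hmax)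
    (hT : T ≤ H + B) (hTcard : Multiset.card T = 2 * f + 1) :
    Hmin ≤ oddMedian f T ∧ oddMedian f T ≤ Hmax := by
  have honest_majority (p : ℝ → Prop) [DecidablePred p] (hp : ∀ x ∈ H, p x) :
      f < T.countP p := by
    have := Multiset.card_le_countP_add_card hT hp
    omega
  exact ⟨le_oddMedian hTcard (honest_majority _ fun x hx => (hHbound x hx).1),
    oddMedian_le hTcard (honest_majority _ fun x hx => (hHbound x hx).2)⟩

/-- Among 3f+1 observations with at most f Byzantine and honest
observations in [Hmin, Hmax], the median of any sub-multiset of 2f+1 of them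
lies in [Hmin, Hmax]. -/
theorem median_of_submultiset_bounds (f : ℕ) (Hmin Hmax : ℝ)
    (H B T : Multiset ℝ)
    (hcard : Multiset.card (H + B) = 3 * f + 1)
    (hB : Multiset.card B ≤ f)
    (hHbound : ∀ x ∈ H, Hmin ≤ x ∧ x ≤ Hmax)
    (hT : T ≤ H + B) (hTcard : Multiset.card T = 2 * f + 1) :
    Hmin ≤ oddMedian f T ∧ oddMedian f T ≤ Hmax :=
  median_of_submultiset_bounds_general f Hmin Hmax H B T hB hHbound hT hTcard
end

section
/- Let f ≥ 1. Consider 2f+1 honest observations of which 2f equal Hmin and one equals Hmax, and f Byzantine observations each equal to Hmax + c for some c > 0. Then there exists a choice of 2f+1 observations out of these 3f+1 whose median equals Hmax, while the median of the 2f+1 honest observations equals Hmin. Hence the error of the median-of-(2f+1) rule can be as large as |Hmax − Hmin|. -/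
namespace Multiset

variable {α : Type*} [LinearOrder α]

theorem sort_replicate_add {a : α} {s : Multiset α} (h : ∀ b ∈ s, a ≤ b) (m : ℕ) :
    (replicate m a + s).sort (· ≤ ·) = List.replicate m a ++ s.sort (· ≤ ·) := by
  induction m with
  | zero => simp
  | succ m ih =>
    rw [replicate_succ, cons_add, sort_cons, ih, List.replicate_succ, List.cons_append]
    intro b hb
    rcases mem_add.1 hb with hb | hb
    · rw [eq_of_mem_replicate hb]
    · exact h b hb

end Multiset

open Multiset

theorem oddMedian_replicate_add_of_lt {f m : ℕ} {a : ℝ} {s : Multiset ℝ}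
    (h : ∀ b ∈ s, a ≤ b) (hf : f < m) : oddMedian f (replicate m a + s) = a := by
  rw [oddMedian, sort_replicate_add h]
  simp [List.getElem?_append_left, hf]

theorem oddMedian_replicate_add_cons {f : ℕ} {a b : ℝ} {s : Multiset ℝ}
    (hab : a ≤ b) (h : ∀ x ∈ s, b ≤ x) : oddMedian f (replicate f a + b ::ₘ s) = b := by
  have ha : ∀ x ∈ b ::ₘ s, a ≤ x := by
    intro x hx
    rcases mem_cons.1 hx with rfl | hx
    exacts [hab, hab.trans (h x hx)]
  rw [oddMedian, sort_replicate_add ha, sort_cons _ _ _ h]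
  simp

/-- With 2f honest observations at Hmin, one honest at Hmax, and f
Byzantine at Hmax + c (c > 0), some choice of 2f+1 of the 3f+1 observations has
median Hmax, while the honest median is Hmin; hence the error of the
median-of-(2f+1) rule can be as large as |Hmax − Hmin|. -/
theorem median_error_lower_bound (f : ℕ) (hf : 1 ≤ f) (Hmin Hmax c : ℝ)
    (hle : Hmin ≤ Hmax) (hc : 0 < c) :
    ∃ T : Multiset ℝ,
      T ≤ (Multiset.replicate (2 * f) Hmin + {Hmax}) + Multiset.replicate f (Hmax + c) ∧
      Multiset.card T = 2 * f + 1 ∧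
      oddMedian f T = Hmax ∧
      oddMedian f (Multiset.replicate (2 * f) Hmin + {Hmax}) = Hmin ∧
      |oddMedian f T - oddMedian f (Multiset.replicate (2 * f) Hmin + {Hmax})|
        = |Hmax - Hmin| := by
  have hbyz : ∀ x ∈ replicate f (Hmax + c), Hmax ≤ x := fun x hx => by
    rw [eq_of_mem_replicate hx]; linarith
  have hT := oddMedian_replicate_add_cons (f := f) hle hbyz
  have hH : oddMedian f (replicate (2 * f) Hmin + {Hmax}) = Hmin :=
    oddMedian_replicate_add_of_lt (by simpa using hle) (by omega)
  refine ⟨replicate f Hmin + Hmax ::ₘ replicate f (Hmax + c), ?_, ?_, hT, hH, by rw [hT, hH]⟩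
  · rw [add_assoc, singleton_add]
    gcongr
    omega
  · rw [card_add, card_cons, card_replicate, card_replicate]
    ring
end

section
/- If a coherent cluster of size f+1 with agreement distance d exists among the reported values and all honest reported values lie in [Hmin, Hmax], then any two coherent clusters of size f+1 (each necessarily containing an honest value) have means that differ by at most (Hmax − Hmin) + 2d. -/
lemma cluster_has_honest (f : ℕ) (H B CC : Multiset ℝ)
    (hB : Multiset.card B ≤ f) (hO : CC ≤ H + B)
    (hcard : Multiset.card CC = f + 1) :
    ∃ h, h ∈ CC ∧ h ∈ H := by
  have hsub : CC - B ≤ H := by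
    rw [tsub_le_iff_right]; exact hO
  have hpos : 0 < Multiset.card (CC - B) := by
    have h1 : CC ≤ CC - B + B := le_tsub_add
    have h2 := Multiset.card_le_card h1
    rw [Multiset.card_add] at h2
    omega
  obtain ⟨x, hx⟩ := Multiset.card_pos_iff_exists_mem.mp hpos
  exact ⟨x, Multiset.mem_of_le tsub_le_self hx, Multiset.mem_of_le hsub hx⟩

lemma mean_close (d : ℝ) (n : ℕ) (CC : Multiset ℝ) (h : ℝ)
    (hn : Multiset.card CC = n + 1) (hh : h ∈ CC)
    (hcoh : ∀ x ∈ CC, |x - h| ≤ d) :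
    |CC.sum / (n + 1) - h| ≤ d := by
  have hne : ((n : ℝ) + 1) ≠ 0 := by positivity
  have key : |CC.sum - (n + 1) * h| ≤ (n + 1) * d := by
    have heq : (CC.map (fun x => x - h)).sum = CC.sum - (n + 1) * h := by
      rw [Multiset.sum_map_sub, Multiset.map_id', Multiset.map_const', Multiset.sum_replicate, hn]
      push_cast; ring
    rw [← heq]
    calc |(CC.map (fun x => x - h)).sum| ≤ ((CC.map (fun x => x - h)).map abs).sum := by
          exact Multiset.abs_sum_le_sum_abs
      _ ≤ Multiset.card ((CC.map (fun x => x - h)).map abs) • d := by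
          apply Multiset.sum_le_card_nsmul
          intro x hx
          simp only [Multiset.mem_map] at hx
          obtain ⟨y, ⟨z, hz, rfl⟩, rfl⟩ := hx
          exact hcoh z hz
      _ = (n + 1) * d := by simp [hn, nsmul_eq_mul]
  have hpos : (0:ℝ) < n + 1 := by positivity
  have : CC.sum / (n + 1) - h = (CC.sum - (n + 1) * h) / (n + 1) := by field_simp
  rw [this, abs_div, abs_of_pos hpos, div_le_iff₀ hpos]
  linarith


/-- Among 2f+1 reported values with at most f Byzantine and honest
values in [Hmin, Hmax], any two coherent clusters of size f+1 with agreement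
distance d have means differing by at most (Hmax − Hmin) + 2d. -/
theorem two_cluster_means_close (f : ℕ) (d Hmin Hmax : ℝ)
    (hd : 0 ≤ d) (hle : Hmin ≤ Hmax)
    (H B : Multiset ℝ)
    (hcard : Multiset.card (H + B) = 2 * f + 1)
    (hB : Multiset.card B ≤ f)
    (hHbound : ∀ x ∈ H, Hmin ≤ x ∧ x ≤ Hmax)
    (CC₁ CC₂ : Multiset ℝ)
    (h₁O : CC₁ ≤ H + B) (h₂O : CC₂ ≤ H + B)
    (h₁card : Multiset.card CC₁ = f + 1) (h₂card : Multiset.card CC₂ = f + 1)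
    (h₁coh : ∀ x ∈ CC₁, ∀ y ∈ CC₁, |x - y| ≤ d)
    (h₂coh : ∀ x ∈ CC₂, ∀ y ∈ CC₂, |x - y| ≤ d) :
    |CC₁.sum / (f + 1) - CC₂.sum / (f + 1)| ≤ (Hmax - Hmin) + 2 * d := by
  obtain ⟨h₁, hh₁C, hh₁H⟩ := cluster_has_honest f H B CC₁ hB h₁O h₁card
  obtain ⟨h₂, hh₂C, hh₂H⟩ := cluster_has_honest f H B CC₂ hB h₂O h₂card
  have m₁ : |CC₁.sum / (f + 1) - h₁| ≤ d :=
    mean_close d f CC₁ h₁ h₁card hh₁C (fun x hx => h₁coh x hx h₁ hh₁C)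
  have m₂ : |CC₂.sum / (f + 1) - h₂| ≤ d :=
    mean_close d f CC₂ h₂ h₂card hh₂C (fun x hx => h₂coh x hx h₂ hh₂C)
  have b₁ := hHbound h₁ hh₁H
  have b₂ := hHbound h₂ hh₂H
  have hdiff : |h₁ - h₂| ≤ Hmax - Hmin := by
    rw [abs_sub_le_iff]; constructor <;> linarith [b₁.1, b₁.2, b₂.1, b₂.2]
  have t1 := abs_sub_le (CC₁.sum / ((f:ℝ) + 1)) h₁ (CC₂.sum / ((f:ℝ) + 1))
  have t2 := abs_sub_le h₁ h₂ (CC₂.sum / ((f:ℝ) + 1))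
  have t3 := abs_sub_comm h₂ (CC₂.sum / ((f:ℝ) + 1))
  linarith
end
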